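/- arXiv:1809.10566 — 3 statements merged into one kernel-verified Lean document; each statement's English description precedes it below -/
import Mathlib

section
/- The outstanding balance B(x,n,k) = (x^n - x^k)/(x^n - 1) is a strictly increasing function of x on (1, ∞), for integers 1 ≤ k < n. -/
open Finset in
lemma key_ineq (n k : ℕ) (hk : 1 ≤ k) (hkn : k < n) (x : ℝ) (hx : 1 < x) :
    (k : ℝ) * x ^ (k - 1) * (x ^ n - 1) < (n : ℝ) * x ^ (n - 1) * (x ^ k - 1) := by
  obtain ⟨a, rfl⟩ : ∃ a, k = a + 1 := ⟨k - 1, by omega⟩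
  obtain ⟨b, rfl⟩ : ∃ b, n = (b + 1) + (a + 1) := ⟨n - a - 2, by omega⟩
  have hx0 : (0:ℝ) < x := by linarith
  have hx1 : (0:ℝ) < x - 1 := by linarith
  set S : ℕ → ℝ := fun m => ∑ i ∈ range m, x ^ i with hS
  have hgeom : ∀ m : ℕ, x ^ m - 1 = S m * (x - 1) := fun m => (geom_sum_mul x m).symm
  have hsplit : S (b + 1 + (a + 1)) = S (b + 1) + x ^ (b + 1) * S (a + 1) := by
    simp only [hS]
    rw [Finset.sum_range_add, Finset.mul_sum]
    congr 1
    exact Finset.sum_congr rfl fun i _ => pow_add x (b + 1) i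
  have h1 : S (b + 1) < ((b:ℝ) + 1) * x ^ (b + 1) := by
    have hle : S (b + 1) ≤ (range (b + 1)).card • x ^ b := by
      apply Finset.sum_le_card_nsmul
      intro i hi
      exact pow_le_pow_right₀ hx.le (by have := Finset.mem_range.mp hi; omega)
    have : S (b + 1) ≤ ((b:ℝ) + 1) * x ^ b := by
      simpa [nsmul_eq_mul] using hle
    have hbb : x ^ b < x ^ (b + 1) := pow_lt_pow_right₀ hx (Nat.lt_succ_self b)
    calc S (b + 1) ≤ ((b:ℝ) + 1) * x ^ b := this
      _ < ((b:ℝ) + 1) * x ^ (b + 1) := by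
          apply mul_lt_mul_of_pos_left hbb; positivity
  have h2 : (a + 1 : ℝ) ≤ S (a + 1) := by
    have : (range (a + 1)).card • (1:ℝ) ≤ S (a + 1) := by
      apply Finset.card_nsmul_le_sum
      intro i hi
      exact one_le_pow₀ hx.le
    simpa [nsmul_eq_mul] using this
  have hSk : (0:ℝ) < S (a + 1) := by positivity
  have hxb : (0:ℝ) < x ^ (b + 1) := by positivity
  have hpowsum : x ^ a * x ^ (b + 1) = x ^ (a + b + 1) := by
    rw [← pow_add, show a + (b + 1) = a + b + 1 from by omega]
  have hkey : ((a:ℝ) + 1) * x ^ a * S (b + 1 + (a + 1)) <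
      ((b:ℝ) + 1 + (a + 1)) * x ^ (a + b + 1) * S (a + 1) := by
    rw [hsplit]
    have e1 : ((a:ℝ)+1) * x ^ a * S (b+1) < ((a:ℝ)+1) * x ^ a * (((b:ℝ)+1) * x ^ (b+1)) := by
      apply mul_lt_mul_of_pos_left h1
      positivity
    have e2 : ((a:ℝ)+1) * x ^ a * (((b:ℝ)+1) * x ^ (b+1)) ≤
        ((b:ℝ)+1) * x ^ (a+b+1) * S (a+1) := by
      have h3 : ((a:ℝ)+1) * (((b:ℝ)+1) * x ^ (a+b+1)) ≤ S (a+1) * (((b:ℝ)+1) * x ^ (a+b+1)) := by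
        apply mul_le_mul_of_nonneg_right h2
        positivity
      calc ((a:ℝ)+1) * x ^ a * (((b:ℝ)+1) * x ^ (b+1))
          = ((a:ℝ)+1) * (((b:ℝ)+1) * (x ^ a * x ^ (b+1))) := by ring
        _ = ((a:ℝ)+1) * (((b:ℝ)+1) * x ^ (a+b+1)) := by rw [hpowsum]
        _ ≤ S (a+1) * (((b:ℝ)+1) * x ^ (a+b+1)) := h3
        _ = ((b:ℝ)+1) * x ^ (a+b+1) * S (a+1) := by ring
    have e3 : ((a:ℝ)+1) * x ^ a * (x ^ (b+1) * S (a+1)) =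
        ((a:ℝ)+1) * x ^ (a+b+1) * S (a+1) := by
      calc ((a:ℝ)+1) * x ^ a * (x ^ (b+1) * S (a+1))
          = ((a:ℝ)+1) * (x ^ a * x ^ (b+1)) * S (a+1) := by ring
        _ = ((a:ℝ)+1) * x ^ (a+b+1) * S (a+1) := by rw [hpowsum]
    nlinarith [e1, e2, e3]
  have hsub1 : (b + 1 + (a + 1)) - 1 = a + b + 1 := by omega
  have hsub2 : (a + 1) - 1 = a := by omega
  rw [hsub1, hsub2, hgeom, hgeom]
  push_cast
  calc ((a:ℝ)+1) * x ^ a * (S (b+1+(a+1)) * (x-1))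
      = (((a:ℝ)+1) * x ^ a * S (b+1+(a+1))) * (x-1) := by ring
    _ < (((b:ℝ)+1+((a:ℝ)+1)) * x ^ (a+b+1) * S (a+1)) * (x-1) :=
        mul_lt_mul_of_pos_right hkey hx1
    _ = ((b:ℝ)+1+((a:ℝ)+1)) * x ^ (a+b+1) * (S (a+1) * (x-1)) := by ring

theorem stmt_5 (n k : ℕ) (hk : 1 ≤ k) (hkn : k < n) :
    StrictMonoOn (fun x : ℝ => (x ^ n - x ^ k) / (x ^ n - 1)) (Set.Ioi 1) := by
  have hden : ∀ x : ℝ, x ∈ Set.Ioi (1:ℝ) → x ^ n - 1 ≠ 0 := by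
    intro x hx
    have : (1:ℝ) < x ^ n := one_lt_pow₀ hx (by omega)
    linarith
  apply strictMonoOn_of_deriv_pos (convex_Ioi 1)
  · apply ContinuousOn.div
    · fun_prop
    · fun_prop
    · exact hden
  · intro x hx
    rw [interior_Ioi] at hx
    have hx1 : (1:ℝ) < x := hx
    have hxn : (1:ℝ) < x ^ n := one_lt_pow₀ hx1 (by omega)
    have hne : x ^ n - 1 ≠ 0 := by linarith
    have hd : HasDerivAt (fun x : ℝ => (x ^ n - x ^ k) / (x ^ n - 1))
        ((((n:ℝ) * x ^ (n-1) - (k:ℝ) * x ^ (k-1)) * (x ^ n - 1) -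
          (x ^ n - x ^ k) * ((n:ℝ) * x ^ (n-1))) / (x ^ n - 1) ^ 2) x :=
      HasDerivAt.div ((hasDerivAt_pow n x).sub (hasDerivAt_pow k x))
        ((hasDerivAt_pow n x).sub_const 1) hne
    rw [hd.deriv]
    apply div_pos
    · nlinarith [key_ineq n k hk hkn x hx1]
    · positivity
end

section
/- If n - 2k + 3 < 0, then the function x ↦ (x^n - x^k)/(x^n - 1) is convex-concave on (1, ∞): there exists r_0 > 1 such that its second derivative is positive on (1, r_0) and negative on (r_0, ∞), for integers 1 ≤ k < n. -/
open Set

namespace Stmt17Aux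

/-- `u(x) = P(x)/x^k` where `P = x^2 (x^n-1)^3 f''`, with `k = j+1`, `n = j+e+2`. -/
noncomputable def uf (j e : ℕ) : ℝ → ℝ := fun x =>
  -(((e:ℝ)+1)*((e:ℝ)+2)) * x^(2*j+2*e+4)
  + (((j:ℝ)+e+2)*((j:ℝ)+e+3)) * x^(j+2*e+3)
  + (2*((j:ℝ)+1)*(j:ℝ) - ((j:ℝ)+e+2)^2 + ((j:ℝ)+e+2) - 2*((j:ℝ)+e+2)*((j:ℝ)+1)) * x^(j+e+2)
  + (((j:ℝ)+e+2)*((j:ℝ)+e+1)) * x^(e+1)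
  - ((j:ℝ)+1)*(j:ℝ)

noncomputable def vf (j e : ℕ) : ℝ → ℝ := fun x =>
  -(2*((j:ℝ)+e+2)*(((e:ℝ)+1)*((e:ℝ)+2))) * x^(2*j+e+3)
  + (((j:ℝ)+2*e+3)*(((j:ℝ)+e+2)*((j:ℝ)+e+3))) * x^(j+e+2)
  + (((j:ℝ)+e+2)*(2*((j:ℝ)+1)*(j:ℝ) - ((j:ℝ)+e+2)^2 + ((j:ℝ)+e+2) - 2*((j:ℝ)+e+2)*((j:ℝ)+1))) * x^(j+1)
  + ((e:ℝ)+1)*(((j:ℝ)+e+2)*((j:ℝ)+e+1))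

noncomputable def wf (j e : ℕ) : ℝ → ℝ := fun x =>
  -(2*((j:ℝ)+e+2)*(2*(j:ℝ)+e+3)*(((e:ℝ)+1)*((e:ℝ)+2))) * x^(j+e+2)
  + (((j:ℝ)+e+2)*((j:ℝ)+2*e+3)*(((j:ℝ)+e+2)*((j:ℝ)+e+3))) * x^(e+1)
  + ((j:ℝ)+e+2)*((j:ℝ)+1)*(2*((j:ℝ)+1)*(j:ℝ) - ((j:ℝ)+e+2)^2 + ((j:ℝ)+e+2) - 2*((j:ℝ)+e+2)*((j:ℝ)+1))

noncomputable def zf (j e : ℕ) : ℝ → ℝ := fun x =>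
  -(2*((j:ℝ)+e+2)^2*(2*(j:ℝ)+e+3)*(((e:ℝ)+1)*((e:ℝ)+2))) * x^(j+1)
  + ((j:ℝ)+e+2)*((e:ℝ)+1)*((j:ℝ)+2*e+3)*(((j:ℝ)+e+2)*((j:ℝ)+e+3))

lemma cont_uf (j e : ℕ) : Continuous (uf j e) := by unfold uf; fun_prop
lemma cont_vf (j e : ℕ) : Continuous (vf j e) := by unfold vf; fun_prop
lemma cont_wf (j e : ℕ) : Continuous (wf j e) := by unfold wf; fun_prop
lemma cont_zf (j e : ℕ) : Continuous (zf j e) := by unfold zf; fun_prop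

lemma uf_one (j e : ℕ) : uf j e 1 = 0 := by unfold uf; ring
lemma vf_one (j e : ℕ) : vf j e 1 = 0 := by unfold vf; ring
lemma wf_one (j e : ℕ) : wf j e 1 = 0 := by unfold wf; ring
lemma zf_one (j e : ℕ) :
    zf j e 1 = ((j:ℝ)+e+2)^2*((j:ℝ)+1)*((e:ℝ)+1)*((j:ℝ)-e-3) := by unfold zf; ring

lemma hasDerivAt_uf (j e : ℕ) (x : ℝ) : HasDerivAt (uf j e) (x^e * vf j e x) x := by
  have h1 := ((hasDerivAt_pow (2*j+2*e+4) x).const_mul (-(((e:ℝ)+1)*((e:ℝ)+2)))).add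
      ((hasDerivAt_pow (j+2*e+3) x).const_mul (((j:ℝ)+e+2)*((j:ℝ)+e+3)))
  have h2 := h1.add ((hasDerivAt_pow (j+e+2) x).const_mul
      (2*((j:ℝ)+1)*(j:ℝ) - ((j:ℝ)+e+2)^2 + ((j:ℝ)+e+2) - 2*((j:ℝ)+e+2)*((j:ℝ)+1)))
  have h3 := (h2.add ((hasDerivAt_pow (e+1) x).const_mul
      (((j:ℝ)+e+2)*((j:ℝ)+e+1)))).sub_const (((j:ℝ)+1)*(j:ℝ))
  convert h3 using 1
  · rfl
  · rfl
  · rfl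
  have e1 : 2*j+2*e+4-1 = 2*j+2*e+3 := by omega
  have e2 : j+2*e+3-1 = j+2*e+2 := by omega
  have e3 : j+e+2-1 = j+e+1 := by omega
  have e4 : e+1-1 = e := by omega
  rw [e1, e2, e3, e4]
  unfold vf
  push_cast
  ring

lemma hasDerivAt_vf (j e : ℕ) (x : ℝ) : HasDerivAt (vf j e) (x^j * wf j e x) x := by
  have h1 := ((hasDerivAt_pow (2*j+e+3) x).const_mul
      (-(2*((j:ℝ)+e+2)*(((e:ℝ)+1)*((e:ℝ)+2))))).add
      ((hasDerivAt_pow (j+e+2) x).const_mul (((j:ℝ)+2*e+3)*(((j:ℝ)+e+2)*((j:ℝ)+e+3))))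
  have h2 := (h1.add ((hasDerivAt_pow (j+1) x).const_mul
      (((j:ℝ)+e+2)*(2*((j:ℝ)+1)*(j:ℝ) - ((j:ℝ)+e+2)^2 + ((j:ℝ)+e+2)
        - 2*((j:ℝ)+e+2)*((j:ℝ)+1))))).add_const
      (((e:ℝ)+1)*(((j:ℝ)+e+2)*((j:ℝ)+e+1)))
  convert h2 using 1
  · rfl
  · rfl
  · rfl
  have e1 : 2*j+e+3-1 = 2*j+e+2 := by omega
  have e2 : j+e+2-1 = j+e+1 := by omega
  have e3 : j+1-1 = j := by omega
  rw [e1, e2, e3]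
  unfold wf
  push_cast
  ring

lemma hasDerivAt_wf (j e : ℕ) (x : ℝ) : HasDerivAt (wf j e) (x^e * zf j e x) x := by
  have h1 := (((hasDerivAt_pow (j+e+2) x).const_mul
      (-(2*((j:ℝ)+e+2)*(2*(j:ℝ)+e+3)*(((e:ℝ)+1)*((e:ℝ)+2))))).add
      ((hasDerivAt_pow (e+1) x).const_mul
        (((j:ℝ)+e+2)*((j:ℝ)+2*e+3)*(((j:ℝ)+e+2)*((j:ℝ)+e+3))))).add_const
      (((j:ℝ)+e+2)*((j:ℝ)+1)*(2*((j:ℝ)+1)*(j:ℝ) - ((j:ℝ)+e+2)^2 + ((j:ℝ)+e+2)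
        - 2*((j:ℝ)+e+2)*((j:ℝ)+1)))
  convert h1 using 1
  · rfl
  · rfl
  · rfl
  have e1 : j+e+2-1 = j+e+1 := by omega
  have e2 : e+1-1 = e := by omega
  rw [e1, e2]
  unfold zf
  push_cast
  ring

/-- `zf` has at most one zero on `(0,∞)` (it is strictly decreasing there). -/
lemma zf_two (j e : ℕ) {a b : ℝ} (ha : 0 < a) (hab : a < b)
    (hza : zf j e a = 0) (hzb : zf j e b = 0) : False := by
  have hC : 0 < 2*((j:ℝ)+e+2)^2*(2*(j:ℝ)+e+3)*(((e:ℝ)+1)*((e:ℝ)+2)) := by positivity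
  have hpow : a^(j+1) < b^(j+1) := pow_lt_pow_left₀ hab ha.le (by omega)
  have : zf j e b < zf j e a := by
    unfold zf; nlinarith [hpow, hC]
  rw [hza, hzb] at this; exact lt_irrefl _ this

/-- `wf` has at most two zeros on `(0,∞)`. -/
lemma wf_three (j e : ℕ) {a b c : ℝ} (ha : 0 < a) (hab : a < b) (hbc : b < c)
    (hwa : wf j e a = 0) (hwb : wf j e b = 0) (hwc : wf j e c = 0) : False := by
  obtain ⟨p, hp, hzp⟩ := exists_hasDerivAt_eq_zero hab (cont_wf j e).continuousOn
    (hwa.trans hwb.symm) (fun x _ => hasDerivAt_wf j e x)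
  obtain ⟨q, hq, hzq⟩ := exists_hasDerivAt_eq_zero hbc (cont_wf j e).continuousOn
    (hwb.trans hwc.symm) (fun x _ => hasDerivAt_wf j e x)
  have hp0 : 0 < p := ha.trans hp.1
  have hq0 : 0 < q := ha.trans (hab.trans hq.1)
  have hzp' : zf j e p = 0 := by
    have := pow_ne_zero e (ne_of_gt hp0)
    exact (mul_eq_zero.mp hzp).resolve_left this
  have hzq' : zf j e q = 0 := by
    have := pow_ne_zero e (ne_of_gt hq0)
    exact (mul_eq_zero.mp hzq).resolve_left this
  exact zf_two j e hp0 (hp.2.trans hq.1) hzp' hzq'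

/-- `vf` has at most one zero in `(1,∞)` (besides its zero at `1`). -/
lemma vf_pair (j e : ℕ) {p q : ℝ} (h1p : 1 < p) (hpq : p < q)
    (hvp : vf j e p = 0) (hvq : vf j e q = 0) : False := by
  obtain ⟨t₁, ht₁, hw₁⟩ := exists_hasDerivAt_eq_zero h1p (cont_vf j e).continuousOn
    ((vf_one j e).trans hvp.symm) (fun x _ => hasDerivAt_vf j e x)
  obtain ⟨t₂, ht₂, hw₂⟩ := exists_hasDerivAt_eq_zero hpq (cont_vf j e).continuousOn
    (hvp.trans hvq.symm) (fun x _ => hasDerivAt_vf j e x)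
  have ht₁0 : 0 < t₁ := lt_trans one_pos ht₁.1
  have ht₂0 : 0 < t₂ := lt_trans one_pos (h1p.trans ht₂.1)
  have hw₁' : wf j e t₁ = 0 :=
    (mul_eq_zero.mp hw₁).resolve_left (pow_ne_zero j (ne_of_gt ht₁0))
  have hw₂' : wf j e t₂ = 0 :=
    (mul_eq_zero.mp hw₂).resolve_left (pow_ne_zero j (ne_of_gt ht₂0))
  exact wf_three j e one_pos ht₁.1 (ht₁.2.trans ht₂.1) (wf_one j e) hw₁' hw₂'

/-- `uf` has at most one zero in `(1,∞)`. -/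
lemma uf_pair (j e : ℕ) {a b : ℝ} (h1a : 1 < a) (hab : a < b)
    (hua : uf j e a = 0) (hub : uf j e b = 0) : False := by
  obtain ⟨s₁, hs₁, hv₁⟩ := exists_hasDerivAt_eq_zero h1a (cont_uf j e).continuousOn
    ((uf_one j e).trans hua.symm) (fun x _ => hasDerivAt_uf j e x)
  obtain ⟨s₂, hs₂, hv₂⟩ := exists_hasDerivAt_eq_zero hab (cont_uf j e).continuousOn
    (hua.trans hub.symm) (fun x _ => hasDerivAt_uf j e x)
  have hs₁0 : 0 < s₁ := lt_trans one_pos hs₁.1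
  have hs₂0 : 0 < s₂ := lt_trans one_pos (h1a.trans hs₂.1)
  have hv₁' : vf j e s₁ = 0 :=
    (mul_eq_zero.mp hv₁).resolve_left (pow_ne_zero e (ne_of_gt hs₁0))
  have hv₂' : vf j e s₂ = 0 :=
    (mul_eq_zero.mp hv₂).resolve_left (pow_ne_zero e (ne_of_gt hs₂0))
  exact vf_pair j e hs₁.1 (hs₁.2.trans hs₂.1) hv₁' hv₂'

/-- If `F 1 = 0` and `F' > 0` on `(1,s)` then `F > 0` on `(1,s)`. -/
lemma pos_of_deriv_pos {F F' : ℝ → ℝ} {s : ℝ} (hc : Continuous F) (hF1 : F 1 = 0)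
    (hd : ∀ y, HasDerivAt F (F' y) y) (hp : ∀ y ∈ Ioo 1 s, 0 < F' y) :
    ∀ x ∈ Ioo 1 s, 0 < F x := by
  intro x hx
  obtain ⟨c, hc', heq⟩ := exists_hasDerivAt_eq_slope F F' hx.1 hc.continuousOn
    (fun y _ => hd y)
  have hcs : c ∈ Ioo 1 s := ⟨hc'.1, hc'.2.trans hx.2⟩
  have h1 := hp c hcs
  rw [heq, hF1, sub_zero] at h1
  have hx1 : 0 < x - 1 := sub_pos.mpr hx.1
  have := mul_pos h1 hx1
  rwa [div_mul_cancel₀ _ (ne_of_gt hx1)] at this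

/-- `uf` is negative for large `x`. -/
lemma uf_neg_large (j e : ℕ) {x : ℝ} (hx1 : 1 < x)
    (hxb : (((j:ℝ)+e+2)*((j:ℝ)+e+3) + ((j:ℝ)+e+2)*((j:ℝ)+e+1)) / (((e:ℝ)+1)*((e:ℝ)+2)) < x) :
    uf j e x < 0 := by
  have hApos : (0:ℝ) < ((e:ℝ)+1)*((e:ℝ)+2) := by positivity
  have hbd : ((j:ℝ)+e+2)*((j:ℝ)+e+3) + ((j:ℝ)+e+2)*((j:ℝ)+e+1) < (((e:ℝ)+1)*((e:ℝ)+2)) * x := by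
    rw [div_lt_iff₀ hApos] at hxb; linarith [hxb]
  have hx0 : (0:ℝ) < x := lt_trans one_pos hx1
  have hb1 : x^(j+2*e+3) ≤ x^(2*j+2*e+3) := pow_le_pow_right₀ hx1.le (by omega)
  have hb2 : x^(e+1) ≤ x^(2*j+2*e+3) := pow_le_pow_right₀ hx1.le (by omega)
  have hxp : (0:ℝ) < x^(2*j+2*e+3) := by positivity
  have hcneg : (2*((j:ℝ)+1)*(j:ℝ) - ((j:ℝ)+e+2)^2 + ((j:ℝ)+e+2) - 2*((j:ℝ)+e+2)*((j:ℝ)+1)) ≤ 0 := by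
    nlinarith [Nat.cast_nonneg (α := ℝ) j, Nat.cast_nonneg (α := ℝ) e]
  have hEneg : -((j:ℝ)+1)*(j:ℝ) ≤ 0 := by
    nlinarith [Nat.cast_nonneg (α := ℝ) j]
  have hpow4 : x^(2*j+2*e+4) = x^(2*j+2*e+3) * x := by
    rw [show 2*j+2*e+4 = (2*j+2*e+3)+1 by omega, pow_succ]
  have e1 : (((j:ℝ)+e+2)*((j:ℝ)+e+3)) * x^(j+2*e+3) ≤ (((j:ℝ)+e+2)*((j:ℝ)+e+3)) * x^(2*j+2*e+3) :=
    mul_le_mul_of_nonneg_left hb1 (by positivity)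
  have e2 : (((j:ℝ)+e+2)*((j:ℝ)+e+1)) * x^(e+1) ≤ (((j:ℝ)+e+2)*((j:ℝ)+e+1)) * x^(2*j+2*e+3) :=
    mul_le_mul_of_nonneg_left hb2 (by positivity)
  have e3 : (2*((j:ℝ)+1)*(j:ℝ) - ((j:ℝ)+e+2)^2 + ((j:ℝ)+e+2)
      - 2*((j:ℝ)+e+2)*((j:ℝ)+1)) * x^(j+e+2) ≤ 0 :=
    mul_nonpos_of_nonpos_of_nonneg hcneg (by positivity)
  have key : uf j e x ≤ (-((((e:ℝ)+1)*((e:ℝ)+2))*x) + ((j:ℝ)+e+2)*((j:ℝ)+e+3)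
      + ((j:ℝ)+e+2)*((j:ℝ)+e+1)) * x^(2*j+2*e+3) := by
    unfold uf
    rw [hpow4]
    nlinarith [e1, e2, e3, hEneg]
  have hneg : (-((((e:ℝ)+1)*((e:ℝ)+2))*x) + ((j:ℝ)+e+2)*((j:ℝ)+e+3)
      + ((j:ℝ)+e+2)*((j:ℝ)+e+1)) * x^(2*j+2*e+3) < 0 :=
    mul_neg_of_neg_of_pos (by linarith) hxp
  linarith

lemma den_pos (j e : ℕ) {x : ℝ} (hx : 1 < x) : 0 < x^(j+e+2) - 1 :=
  sub_pos.mpr (one_lt_pow₀ hx (by omega))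

noncomputable def F1 (j e : ℕ) : ℝ → ℝ := fun x =>
  (((e:ℝ)+1)*x^(2*j+e+2) - ((j:ℝ)+e+2)*x^(j+e+1) + ((j:ℝ)+1)*x^j) / (x^(j+e+2)-1)^2

lemma hasDerivAt_F (j e : ℕ) (x : ℝ) (hx : 1 < x) :
    HasDerivAt (fun x : ℝ => (x^(j+e+2) - x^(j+1))/(x^(j+e+2)-1)) (F1 j e x) x := by
  have hne : x^(j+e+2) - 1 ≠ 0 := ne_of_gt (den_pos j e hx)
  have h1 : HasDerivAt (fun x : ℝ => x^(j+e+2) - x^(j+1))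
      ((↑(j+e+2):ℝ)*x^(j+e+1) - (↑(j+1):ℝ)*x^j) x := by
    have h := (hasDerivAt_pow (j+e+2) x).sub (hasDerivAt_pow (j+1) x)
    rw [show j+e+2-1 = j+e+1 by omega, show j+1-1 = j by omega] at h
    exact h
  have h2 : HasDerivAt (fun x : ℝ => x^(j+e+2) - 1) ((↑(j+e+2):ℝ)*x^(j+e+1)) x := by
    have h := (hasDerivAt_pow (j+e+2) x).sub_const 1
    rw [show j+e+2-1 = j+e+1 by omega] at h
    exact h
  have h3 := h1.div h2 hne
  convert h3 using 1
  · rfl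
  · rfl
  · rfl
  unfold F1
  congr 1
  push_cast
  ring

lemma aux_pow (j : ℕ) (x : ℝ) (hx : x ≠ 0) : (j:ℝ)*x^(j-1) = (j:ℝ)*x^j/x := by
  cases j with
  | zero => simp
  | succ m =>
    rw [Nat.add_sub_cancel]
    field_simp
    rw [pow_succ]

lemma hasDerivAt_F1 (j e : ℕ) (x : ℝ) (hx : 1 < x) :
    HasDerivAt (F1 j e) (x^(j+1) * uf j e x / (x^2 * (x^(j+e+2)-1)^3)) x := by
  have hx0 : x ≠ 0 := ne_of_gt (lt_trans one_pos hx)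
  have hne : x^(j+e+2) - 1 ≠ 0 := ne_of_gt (den_pos j e hx)
  have hNu : HasDerivAt
      (fun x : ℝ => ((e:ℝ)+1)*x^(2*j+e+2) - ((j:ℝ)+e+2)*x^(j+e+1) + ((j:ℝ)+1)*x^j)
      (((e:ℝ)+1)*(2*(j:ℝ)+e+2)*x^(2*j+e+1) - ((j:ℝ)+e+2)*((j:ℝ)+e+1)*x^(j+e)
        + ((j:ℝ)+1)*((j:ℝ)*x^j/x)) x := by
    have h1 := ((hasDerivAt_pow (2*j+e+2) x).const_mul ((e:ℝ)+1)).sub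
      ((hasDerivAt_pow (j+e+1) x).const_mul ((j:ℝ)+e+2))
    have h2 := h1.add ((hasDerivAt_pow j x).const_mul ((j:ℝ)+1))
    convert h2 using 1
    · rfl
    · rfl
    · rfl
    rw [show 2*j+e+2-1 = 2*j+e+1 by omega, show j+e+1-1 = j+e by omega,
      ← aux_pow j x hx0]
    push_cast
    ring
  have hg : HasDerivAt (fun x : ℝ => x^(j+e+2) - 1) ((↑(j+e+2):ℝ)*x^(j+e+1)) x := by
    have h := (hasDerivAt_pow (j+e+2) x).sub_const 1
    rw [show j+e+2-1 = j+e+1 by omega] at h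
    exact h
  have hDen : HasDerivAt (fun x : ℝ => (x^(j+e+2)-1)^2)
      (2*(x^(j+e+2)-1)*((↑(j+e+2):ℝ)*x^(j+e+1))) x := by
    have h := hg.pow 2
    norm_num at h
    convert h using 1
    · rfl
    · rfl
    · rfl
    push_cast
    ring
  have h3 := hNu.div hDen (pow_ne_zero 2 hne)
  have hF1 : F1 j e = fun x : ℝ =>
      (((e:ℝ)+1)*x^(2*j+e+2) - ((j:ℝ)+e+2)*x^(j+e+1) + ((j:ℝ)+1)*x^j) / (x^(j+e+2)-1)^2 := rfl
  rw [hF1]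
  convert h3 using 1
  · rfl
  · rfl
  · rfl
  rw [eq_div_iff (by positivity)]
  unfold uf
  field_simp
  push_cast
  ring

end Stmt17Aux

theorem stmt_17 (n k : ℕ) (hk : 1 ≤ k) (hkn : k < n)
    (h : (n : ℝ) - 2 * k + 3 < 0) :
    ∃ r₀ : ℝ, 1 < r₀ ∧
      (∀ x ∈ Set.Ioo 1 r₀,
        0 < deriv (deriv (fun x : ℝ => (x ^ n - x ^ k) / (x ^ n - 1))) x) ∧
      (∀ x ∈ Set.Ioi r₀,
        deriv (deriv (fun x : ℝ => (x ^ n - x ^ k) / (x ^ n - 1))) x < 0) := by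
  obtain ⟨j, rfl⟩ : ∃ j, k = j + 1 := ⟨k - 1, by omega⟩
  obtain ⟨e, rfl⟩ : ∃ e, n = j + e + 2 := ⟨n - (j + 2), by omega⟩
  clear hk hkn
  push_cast at h
  have hje : (e:ℝ) + 3 < (j:ℝ) := by linarith
  open Stmt17Aux in
  -- second derivative formula
  have hdd : ∀ x : ℝ, 1 < x →
      deriv (deriv (fun x : ℝ => (x ^ (j+e+2) - x ^ (j+1)) / (x ^ (j+e+2) - 1))) x
        = x^(j+1) * Stmt17Aux.uf j e x / (x^2 * (x^(j+e+2)-1)^3) := by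
    intro x hx
    have hev : deriv (fun x : ℝ => (x ^ (j+e+2) - x ^ (j+1)) / (x ^ (j+e+2) - 1))
        =ᶠ[nhds x] Stmt17Aux.F1 j e :=
      Filter.eventuallyEq_of_mem (isOpen_Ioi.mem_nhds hx)
        (fun y hy => (Stmt17Aux.hasDerivAt_F j e y hy).deriv)
    rw [hev.deriv_eq, (Stmt17Aux.hasDerivAt_F1 j e x hx).deriv]
  have hz1 : 0 < Stmt17Aux.zf j e 1 := by
    rw [Stmt17Aux.zf_one]
    have h1 : (0:ℝ) < (j:ℝ) - e - 3 := by linarith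
    have h2 : (0:ℝ) < ((j:ℝ)+e+2)^2*((j:ℝ)+1)*((e:ℝ)+1) := by positivity
    exact mul_pos h2 h1
  -- a right-neighborhood of 1 where zf > 0
  have hev2 : ∀ᶠ y in nhds (1:ℝ), 0 < Stmt17Aux.zf j e y :=
    ((Stmt17Aux.cont_zf j e).continuousAt (x := 1)).eventually (eventually_gt_nhds hz1)
  obtain ⟨ε, hε, hball⟩ := Metric.eventually_nhds_iff.mp hev2
  set s : ℝ := 1 + ε with hs
  have hs1 : 1 < s := by simp [hs]; linarith
  have hzpos : ∀ y ∈ Set.Ioo (1:ℝ) s, 0 < Stmt17Aux.zf j e y := by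
    intro y hy
    apply hball
    rw [Real.dist_eq, abs_of_pos (by linarith [hy.1])]
    have := hy.2
    simp only [hs] at this
    linarith
  have hwpos : ∀ y ∈ Set.Ioo (1:ℝ) s, 0 < Stmt17Aux.wf j e y :=
    Stmt17Aux.pos_of_deriv_pos (Stmt17Aux.cont_wf j e) (Stmt17Aux.wf_one j e)
      (Stmt17Aux.hasDerivAt_wf j e)
      (fun y hy => mul_pos (pow_pos (lt_trans one_pos hy.1) e) (hzpos y hy))
  have hvpos : ∀ y ∈ Set.Ioo (1:ℝ) s, 0 < Stmt17Aux.vf j e y :=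
    Stmt17Aux.pos_of_deriv_pos (Stmt17Aux.cont_vf j e) (Stmt17Aux.vf_one j e)
      (Stmt17Aux.hasDerivAt_vf j e)
      (fun y hy => mul_pos (pow_pos (lt_trans one_pos hy.1) j) (hwpos y hy))
  have hupos : ∀ y ∈ Set.Ioo (1:ℝ) s, 0 < Stmt17Aux.uf j e y :=
    Stmt17Aux.pos_of_deriv_pos (Stmt17Aux.cont_uf j e) (Stmt17Aux.uf_one j e)
      (Stmt17Aux.hasDerivAt_uf j e)
      (fun y hy => mul_pos (pow_pos (lt_trans one_pos hy.1) e) (hvpos y hy))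
  set x₁ : ℝ := (1 + s)/2 with hx₁def
  have hx₁mem : x₁ ∈ Set.Ioo (1:ℝ) s := ⟨by simp [hx₁def]; linarith, by simp [hx₁def]; linarith⟩
  have hux₁ : 0 < Stmt17Aux.uf j e x₁ := hupos x₁ hx₁mem
  set bnd : ℝ := (((j:ℝ)+e+2)*((j:ℝ)+e+3) + ((j:ℝ)+e+2)*((j:ℝ)+e+1)) / (((e:ℝ)+1)*((e:ℝ)+2))
    with hbnd
  set M : ℝ := max x₁ bnd + 1 with hM
  have hMx₁ : x₁ < M := by
    have := le_max_left x₁ bnd; simp only [hM]; linarith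
  have hM1 : 1 < M := lt_trans hx₁mem.1 hMx₁
  have hMbnd : bnd < M := by
    have := le_max_right x₁ bnd; simp only [hM]; linarith
  have huM : Stmt17Aux.uf j e M < 0 := Stmt17Aux.uf_neg_large j e hM1 hMbnd
  obtain ⟨r₀, hr₀mem, hr₀⟩ := intermediate_value_Ioo' (le_of_lt hMx₁)
    (Stmt17Aux.cont_uf j e).continuousOn (Set.mem_Ioo.mpr ⟨huM, hux₁⟩)
  have h1r₀ : 1 < r₀ := lt_trans hx₁mem.1 hr₀mem.1
  refine ⟨r₀, h1r₀, ?_, ?_⟩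
  · intro y hy
    have hy1 : 1 < y := hy.1
    have hy0 : (0:ℝ) < y := lt_trans one_pos hy1
    rw [hdd y hy1]
    have hupos_y : 0 < Stmt17Aux.uf j e y := by
      rcases lt_trichotomy (Stmt17Aux.uf j e y) 0 with hlt | heq | hgt
      · exfalso
        have hyx : y ≠ x₁ := fun hyx => by rw [hyx] at hlt; linarith
        rcases lt_or_gt_of_ne hyx with hyx' | hyx'
        · obtain ⟨q, hqm, hq⟩ := intermediate_value_Ioo (le_of_lt hyx')
            (Stmt17Aux.cont_uf j e).continuousOn (Set.mem_Ioo.mpr ⟨hlt, hux₁⟩)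
          exact Stmt17Aux.uf_pair j e (lt_trans hy1 hqm.1)
            (lt_trans hqm.2 hr₀mem.1) hq hr₀
        · obtain ⟨q, hqm, hq⟩ := intermediate_value_Ioo' (le_of_lt hyx')
            (Stmt17Aux.cont_uf j e).continuousOn (Set.mem_Ioo.mpr ⟨hlt, hux₁⟩)
          exact Stmt17Aux.uf_pair j e (lt_trans hx₁mem.1 hqm.1)
            (lt_trans hqm.2 hy.2) hq hr₀
      · exact absurd (Stmt17Aux.uf_pair j e hy1 hy.2 heq hr₀) id
      · exact hgt
    have hdenp : (0:ℝ) < y^2 * (y^(j+e+2)-1)^3 :=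
      mul_pos (pow_pos hy0 2) (pow_pos (Stmt17Aux.den_pos j e hy1) 3)
    exact div_pos (mul_pos (pow_pos hy0 (j+1)) hupos_y) hdenp
  · intro y hy
    have hy' : r₀ < y := hy
    have hy1 : 1 < y := lt_trans h1r₀ hy'
    have hy0 : (0:ℝ) < y := lt_trans one_pos hy1
    rw [hdd y hy1]
    have huneg_y : Stmt17Aux.uf j e y < 0 := by
      rcases lt_trichotomy (Stmt17Aux.uf j e y) 0 with hlt | heq | hgt
      · exact hlt
      · exact absurd (Stmt17Aux.uf_pair j e h1r₀ hy' hr₀ heq) id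
      · exfalso
        set M' : ℝ := max y bnd + 1 with hM'
        have hM'y : y < M' := by
          have := le_max_left y bnd; simp only [hM']; linarith
        have hM'1 : 1 < M' := lt_trans hy1 hM'y
        have hM'bnd : bnd < M' := by
          have := le_max_right y bnd; simp only [hM']; linarith
        have huM' : Stmt17Aux.uf j e M' < 0 := Stmt17Aux.uf_neg_large j e hM'1 hM'bnd
        obtain ⟨q, hqm, hq⟩ := intermediate_value_Ioo' (le_of_lt hM'y)
          (Stmt17Aux.cont_uf j e).continuousOn (Set.mem_Ioo.mpr ⟨huM', hgt⟩)
        exact Stmt17Aux.uf_pair j e h1r₀ (lt_trans hy' hqm.1) hr₀ hq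
    have hdenp : (0:ℝ) < y^2 * (y^(j+e+2)-1)^3 :=
      mul_pos (pow_pos hy0 2) (pow_pos (Stmt17Aux.den_pos j e hy1) 3)
    exact div_neg_of_neg_of_pos
      (mul_neg_of_pos_of_neg (pow_pos hy0 (j+1)) huneg_y) hdenp
end

section
/- For every integer n ≥ 2, the periodic payment function P(x,n) = (x^{n+1} - x^n)/(x^n - 1) is convex on (1, ∞). -/
open Set

/-- The auxiliary polynomial `R(x) = (m+1)x^(m+2) - (m+2)x^(m+1) + 1` is nonnegative
for `x ≥ 1`. -/
lemma aux_R_nonneg (m : ℕ) {x : ℝ} (hx : 1 ≤ x) :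
    0 ≤ ((m : ℝ) + 1) * x ^ (m + 2) - ((m : ℝ) + 2) * x ^ (m + 1) + 1 := by
  set R : ℝ → ℝ := fun x => ((m : ℝ) + 1) * x ^ (m + 2) - ((m : ℝ) + 2) * x ^ (m + 1) + 1 with hR
  have hderiv : ∀ y : ℝ, HasDerivAt R
      (((m : ℝ) + 1) * ((m : ℝ) + 2) * y ^ (m + 1) - ((m : ℝ) + 2) * ((m : ℝ) + 1) * y ^ m) y := by
    intro y
    have h1 : HasDerivAt (fun y : ℝ => y ^ (m + 2)) (((m : ℝ) + 2) * y ^ (m + 1)) y := by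
      simpa using hasDerivAt_pow (m + 2) y
    have h2 : HasDerivAt (fun y : ℝ => y ^ (m + 1)) (((m : ℝ) + 1) * y ^ m) y := by
      simpa using hasDerivAt_pow (m + 1) y
    have := ((h1.const_mul ((m : ℝ) + 1)).sub (h2.const_mul ((m : ℝ) + 2))).add_const 1
    exact this.congr_deriv (by ring)
  have hmono : MonotoneOn R (Ici (1 : ℝ)) := by
    apply monotoneOn_of_deriv_nonneg (convex_Ici 1)
    · exact fun y _ => ((hderiv y).continuousAt).continuousWithinAt
    · intro y hy
      exact ((hderiv y).differentiableAt).differentiableWithinAt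
    · intro y hy
      rw [interior_Ici] at hy
      rw [(hderiv y).deriv]
      have hy1 : (1 : ℝ) ≤ y := le_of_lt hy
      have h0y : (0 : ℝ) ≤ y := by linarith
      have : ((m : ℝ) + 1) * ((m : ℝ) + 2) * y ^ (m + 1) - ((m : ℝ) + 2) * ((m : ℝ) + 1) * y ^ m
          = ((m : ℝ) + 1) * ((m : ℝ) + 2) * y ^ m * (y - 1) := by ring
      rw [this]
      exact mul_nonneg (by positivity) (by linarith)
  have h1R : R 1 = 0 := by norm_num [hR]
  have := hmono (self_mem_Ici) (mem_Ici.mpr hx) hx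
  rw [h1R] at this
  exact this

/-- The key polynomial `Q(x) = (m+1)x^(m+3) - (m+3)x^(m+2) + (m+3)x - (m+1)` is
nonnegative for `x ≥ 1`. -/
lemma aux_Q_nonneg (m : ℕ) {x : ℝ} (hx : 1 ≤ x) :
    0 ≤ ((m : ℝ) + 1) * x ^ (m + 3) - ((m : ℝ) + 3) * x ^ (m + 2)
      + ((m : ℝ) + 3) * x - ((m : ℝ) + 1) := by
  set Q : ℝ → ℝ := fun x => ((m : ℝ) + 1) * x ^ (m + 3) - ((m : ℝ) + 3) * x ^ (m + 2)
      + ((m : ℝ) + 3) * x - ((m : ℝ) + 1) with hQ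
  have hderiv : ∀ y : ℝ, HasDerivAt Q
      (((m : ℝ) + 3) * (((m : ℝ) + 1) * y ^ (m + 2) - ((m : ℝ) + 2) * y ^ (m + 1) + 1)) y := by
    intro y
    have h1 : HasDerivAt (fun y : ℝ => y ^ (m + 3)) (((m : ℝ) + 3) * y ^ (m + 2)) y := by
      simpa using hasDerivAt_pow (m + 3) y
    have h2 : HasDerivAt (fun y : ℝ => y ^ (m + 2)) (((m : ℝ) + 2) * y ^ (m + 1)) y := by
      simpa using hasDerivAt_pow (m + 2) y
    have := (((h1.const_mul ((m : ℝ) + 1)).sub (h2.const_mul ((m : ℝ) + 3))).add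
      ((hasDerivAt_id y).const_mul ((m : ℝ) + 3))).sub_const ((m : ℝ) + 1)
    exact this.congr_deriv (by ring)
  have hmono : MonotoneOn Q (Ici (1 : ℝ)) := by
    apply monotoneOn_of_deriv_nonneg (convex_Ici 1)
    · exact fun y _ => ((hderiv y).continuousAt).continuousWithinAt
    · intro y hy
      exact ((hderiv y).differentiableAt).differentiableWithinAt
    · intro y hy
      rw [interior_Ici] at hy
      rw [(hderiv y).deriv]
      have hy1 : (1 : ℝ) ≤ y := le_of_lt hy
      have hRy := aux_R_nonneg m hy1
      exact mul_nonneg (by positivity) hRy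
  have h1Q : Q 1 = 0 := by norm_num [hQ]; ring
  have := hmono (self_mem_Ici) (mem_Ici.mpr hx) hx
  rw [h1Q] at this
  exact this

theorem stmt_19 (n : ℕ) (hn : 2 ≤ n) :
    ConvexOn ℝ (Set.Ioi 1) (fun x : ℝ => (x ^ (n + 1) - x ^ n) / (x ^ n - 1)) := by
  obtain ⟨m, rfl⟩ : ∃ m, n = m + 2 := ⟨n - 2, by omega⟩
  set f : ℝ → ℝ := fun x => (x ^ (m + 2 + 1) - x ^ (m + 2)) / (x ^ (m + 2) - 1) with hf
  set f1 : ℝ → ℝ := fun x =>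
    (x ^ (2 * m + 4) - ((m : ℝ) + 3) * x ^ (m + 2) + ((m : ℝ) + 2) * x ^ (m + 1))
      / (x ^ (m + 2) - 1) ^ 2 with hf1
  -- positivity of the denominator on Ioi 1
  have hden : ∀ x : ℝ, x ∈ Ioi (1 : ℝ) → 0 < x ^ (m + 2) - 1 := by
    intro x hx
    have : (1 : ℝ) < x ^ (m + 2) := one_lt_pow₀ hx (by omega)
    linarith
  -- first derivative
  have hD1 : ∀ x : ℝ, x ∈ Ioi (1 : ℝ) → HasDerivAt f (f1 x) x := by
    intro x hx
    have hx1 : (1 : ℝ) < x := hx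
    have hne : x ^ (m + 2) - 1 ≠ 0 := ne_of_gt (hden x hx)
    have hN : HasDerivAt (fun x : ℝ => x ^ (m + 2 + 1) - x ^ (m + 2))
        (((m : ℝ) + 3) * x ^ (m + 2) - ((m : ℝ) + 2) * x ^ (m + 1)) x := by
      have h1 : HasDerivAt (fun y : ℝ => y ^ (m + 3)) (((m : ℝ) + 3) * x ^ (m + 2)) x := by
        simpa using hasDerivAt_pow (m + 3) x
      have h2 : HasDerivAt (fun y : ℝ => y ^ (m + 2)) (((m : ℝ) + 2) * x ^ (m + 1)) x := by
        simpa using hasDerivAt_pow (m + 2) x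
      exact h1.sub h2
    have hDd : HasDerivAt (fun x : ℝ => x ^ (m + 2) - 1) (((m : ℝ) + 2) * x ^ (m + 1)) x := by
      have h2 : HasDerivAt (fun y : ℝ => y ^ (m + 2)) (((m : ℝ) + 2) * x ^ (m + 1)) x := by
        simpa using hasDerivAt_pow (m + 2) x
      simpa using h2.sub_const 1
    have := hN.div hDd hne
    exact this.congr_deriv (by rw [hf1]; congr 1; ring)
  -- second derivative
  have hD2 : ∀ x : ℝ, x ∈ Ioi (1 : ℝ) → HasDerivAt f1
      ((((m : ℝ) + 2) * x ^ m *
        (((m : ℝ) + 1) * x ^ (m + 3) - ((m : ℝ) + 3) * x ^ (m + 2)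
          + ((m : ℝ) + 3) * x - ((m : ℝ) + 1)) * (x ^ (m + 2) - 1))
        / ((x ^ (m + 2) - 1) ^ 2) ^ 2) x := by
    intro x hx
    have hx1 : (1 : ℝ) < x := hx
    have hpos := hden x hx
    have hne : x ^ (m + 2) - 1 ≠ 0 := ne_of_gt hpos
    have hne2 : (x ^ (m + 2) - 1) ^ 2 ≠ 0 := pow_ne_zero 2 hne
    have hN : HasDerivAt (fun x : ℝ =>
        x ^ (2 * m + 4) - ((m : ℝ) + 3) * x ^ (m + 2) + ((m : ℝ) + 2) * x ^ (m + 1))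
        ((2 * (m : ℝ) + 4) * x ^ (2 * m + 3)
          - ((m : ℝ) + 3) * (((m : ℝ) + 2) * x ^ (m + 1))
          + ((m : ℝ) + 2) * (((m : ℝ) + 1) * x ^ m)) x := by
      have h1 : HasDerivAt (fun y : ℝ => y ^ (2 * m + 4)) ((2 * (m : ℝ) + 4) * x ^ (2 * m + 3)) x := by
        have := hasDerivAt_pow (2 * m + 4) x
        simpa [Nat.cast_add, Nat.cast_mul] using this
      have h2 : HasDerivAt (fun y : ℝ => y ^ (m + 2)) (((m : ℝ) + 2) * x ^ (m + 1)) x := by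
        simpa using hasDerivAt_pow (m + 2) x
      have h3 : HasDerivAt (fun y : ℝ => y ^ (m + 1)) (((m : ℝ) + 1) * x ^ m) x := by
        simpa using hasDerivAt_pow (m + 1) x
      exact (h1.sub (h2.const_mul ((m : ℝ) + 3))).add (h3.const_mul ((m : ℝ) + 2))
    have hDd : HasDerivAt (fun x : ℝ => (x ^ (m + 2) - 1) ^ 2)
        (2 * (x ^ (m + 2) - 1) * (((m : ℝ) + 2) * x ^ (m + 1))) x := by
      have h2 : HasDerivAt (fun y : ℝ => y ^ (m + 2) - 1) (((m : ℝ) + 2) * x ^ (m + 1)) x := by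
        simpa using (hasDerivAt_pow (m + 2) x).sub_const 1
      have := h2.pow 2
      exact this.congr_deriv (by ring)
    have := hN.div hDd hne2
    exact this.congr_deriv (by congr 1; ring)
  have hconv : Convex ℝ (Ioi (1 : ℝ)) := convex_Ioi 1
  have hint : interior (Ioi (1 : ℝ)) = Ioi 1 := interior_Ioi
  have hdiff : DifferentiableOn ℝ f (Ioi 1) := fun x hx =>
    ((hD1 x hx).differentiableAt).differentiableWithinAt
  -- deriv f = f1 on Ioi 1
  have hderiv_eq : ∀ x ∈ Ioi (1 : ℝ), deriv f x = f1 x := fun x hx => (hD1 x hx).deriv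
  have hD2' : ∀ x : ℝ, x ∈ Ioi (1 : ℝ) → HasDerivAt (deriv f)
      ((((m : ℝ) + 2) * x ^ m *
        (((m : ℝ) + 1) * x ^ (m + 3) - ((m : ℝ) + 3) * x ^ (m + 2)
          + ((m : ℝ) + 3) * x - ((m : ℝ) + 1)) * (x ^ (m + 2) - 1))
        / ((x ^ (m + 2) - 1) ^ 2) ^ 2) x := by
    intro x hx
    have heq : deriv f =ᶠ[nhds x] f1 := by
      filter_upwards [IsOpen.mem_nhds isOpen_Ioi hx] with y hy
      exact hderiv_eq y hy
    exact (hD2 x hx).congr_of_eventuallyEq heq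
  apply convexOn_of_deriv2_nonneg hconv hdiff.continuousOn
  · rw [hint]; exact hdiff
  · rw [hint]
    intro x hx
    exact ((hD2' x hx).differentiableAt).differentiableWithinAt
  · rw [hint]
    intro x hx
    have hx1 : (1 : ℝ) < x := hx
    have : deriv^[2] f x = deriv (deriv f) x := by
      simp [Function.iterate_succ, Function.iterate_one]
    rw [this, (hD2' x hx).deriv]
    apply div_nonneg
    · have hQ := aux_Q_nonneg m (le_of_lt hx1)
      have h0x : (0 : ℝ) ≤ x := by linarith
      have h1 : (0 : ℝ) ≤ ((m : ℝ) + 2) * x ^ m := by positivity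
      have h2 : (0 : ℝ) ≤ x ^ (m + 2) - 1 := le_of_lt (hden x hx)
      exact mul_nonneg (mul_nonneg h1 hQ) h2
    · positivity
end
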